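/- Let I = (f_1, …, f_s) be a homogeneous ideal of R, with each f_i a homogeneous polynomial, and let M be a generalized Eulerian A_n(K)-module. Then the local cohomology module H^i_I(M) is a generalized Eulerian A_n(K)-module for every i ≥ 0. -/

import Mathlib

/-! ### The Weyl algebra `A_n(K)` as a quotient of the free algebra. -/

/-- The defining relations of the `n`-th Weyl algebra: the `X_i` commute, the `∂_i` commute,
and `∂_i X_j = X_j ∂_i + δ_{ij}`. -/
inductive WeylRel (K : Type) [Field K] (n : ℕ) :
    FreeAlgebra K (Fin n ⊕ Fin n) → FreeAlgebra K (Fin n ⊕ Fin n) → Prop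
  | xx (i j : Fin n) : WeylRel K n
      (FreeAlgebra.ι K (Sum.inl i) * FreeAlgebra.ι K (Sum.inl j))
      (FreeAlgebra.ι K (Sum.inl j) * FreeAlgebra.ι K (Sum.inl i))
  | dd (i j : Fin n) : WeylRel K n
      (FreeAlgebra.ι K (Sum.inr i) * FreeAlgebra.ι K (Sum.inr j))
      (FreeAlgebra.ι K (Sum.inr j) * FreeAlgebra.ι K (Sum.inr i))
  | dx (i j : Fin n) : WeylRel K n
      (FreeAlgebra.ι K (Sum.inr i) * FreeAlgebra.ι K (Sum.inl j))
      (FreeAlgebra.ι K (Sum.inl j) * FreeAlgebra.ι K (Sum.inr i) + if i = j then 1 else 0)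

/-- The `n`-th Weyl algebra over `K`. -/
abbrev WeylAlgebra (K : Type) [Field K] (n : ℕ) : Type := RingQuot (WeylRel K n)

/-- The variable `X_i` (degree `+1`) in the Weyl algebra. -/
noncomputable def Wx (K : Type) [Field K] {n : ℕ} (i : Fin n) : WeylAlgebra K n :=
  RingQuot.mkAlgHom K (WeylRel K n) (FreeAlgebra.ι K (Sum.inl i))

/-- The partial derivative `∂_i` (degree `-1`) in the Weyl algebra. -/
noncomputable def Wd (K : Type) [Field K] {n : ℕ} (i : Fin n) : WeylAlgebra K n :=
  RingQuot.mkAlgHom K (WeylRel K n) (FreeAlgebra.ι K (Sum.inr i))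

/-- The Euler operator `ℰ_n = ∑ X_i ∂_i`. -/
noncomputable def weylEuler (K : Type) [Field K] (n : ℕ) : WeylAlgebra K n :=
  ∑ i : Fin n, Wx K i * Wd K i

/-- The Euler operator `ℰ_r = ∑_{i < r} X_i ∂_i` of the subalgebra `A_r(K) ⊆ A_n(K)`. -/
noncomputable def weylEulerUpTo (K : Type) [Field K] (n r : ℕ) : WeylAlgebra K n :=
  ∑ i ∈ Finset.univ.filter (fun i : Fin n => (i : ℕ) < r), Wx K i * Wd K i

/-- Monomials of degree `d` in the variables `X_1, …, X_n` inside the Weyl algebra. -/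
def xMonomials (K : Type) [Field K] (n d : ℕ) : Set (WeylAlgebra K n) :=
  {w | ∃ l : List (Fin n), l.length = d ∧ w = (l.map (Wx K)).prod}

/-- `f` is a homogeneous polynomial of degree `d` in `R = K[X_1, …, X_n] ⊆ A_n(K)`. -/
def IsHomogPoly (K : Type) [Field K] {n : ℕ} (f : WeylAlgebra K n) (d : ℕ) : Prop :=
  f ∈ Submodule.span K (xMonomials K n d)

/-! ### Graded (left) modules over the Weyl algebra. -/

/-- A graded left `A_n(K)`-module: a module over the Weyl algebra together with an internal
`ℤ`-grading, stable under `K` and such that `X_i` raises degree by one and `∂_i` lowers it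
by one. -/
structure GWM (K : Type) [Field K] (n : ℕ) where
  carrier : Type
  [acg : AddCommGroup carrier]
  [mod : Module (WeylAlgebra K n) carrier]
  deg : ℤ → AddSubgroup carrier
  isInternal : DirectSum.IsInternal deg
  k_smul : ∀ (c : K) (j : ℤ) (m : carrier), m ∈ deg j →
    algebraMap K (WeylAlgebra K n) c • m ∈ deg j
  x_smul : ∀ (i : Fin n) (j : ℤ) (m : carrier), m ∈ deg j → Wx K i • m ∈ deg (j + 1)
  d_smul : ∀ (i : Fin n) (j : ℤ) (m : carrier), m ∈ deg j → Wd K i • m ∈ deg (j - 1)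

attribute [instance] GWM.acg GWM.mod

instance {K : Type} [Field K] {n : ℕ} : CoeSort (GWM K n) Type := ⟨GWM.carrier⟩

/-- A graded `A_n(K)`-module is *generalized Eulerian* if every homogeneous element `z`
is killed by some power of `ℰ_n - |z|`. -/
def GWM.IsGenEulerian {K : Type} [Field K] {n : ℕ} (M : GWM K n) : Prop :=
  ∀ (j : ℤ) (m : M.carrier), m ∈ M.deg j →
    ∃ a : ℕ, 1 ≤ a ∧ ((weylEuler K n - (j : WeylAlgebra K n)) ^ a) • m = 0

/-- A graded module is concentrated in degree `d` if all other graded pieces vanish. -/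
def GWM.ConcentratedIn {K : Type} [Field K] {n : ℕ} (M : GWM K n) (d : ℤ) : Prop :=
  ∀ j : ℤ, j ≠ d → M.deg j = ⊥

/-! ### Koszul (co)homology of a graded module with respect to commuting operators.

The Koszul complex of operators `u : Fin c → A_n(K)` on `M` has, in homological level `i`,
the module of functions from `i`-element subsets of `Fin c` to `M`.  Cohomology `H^ν` is
homology in level `c - ν`. -/

/-- Level `i` of the Koszul complex on `c` operators with values in `M`. -/
abbrev KosLevel {K : Type} [Field K] {n : ℕ} (M : GWM K n) (c : ℕ) (i : ℤ) : Type :=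
  {S : Finset (Fin c) // (S.card : ℤ) = i} → M.carrier

/-- The Koszul differential (from level `a` to level `b`; it is the genuine differential
when `b = a - 1`): `(dψ)(T) = ∑_{k ∉ T} (-1)^{|{x ∈ T | x < k}|} u_k • ψ(T ∪ {k})`. -/
noncomputable def kosDiff {K : Type} [Field K] {n : ℕ} {M : GWM K n} {c : ℕ}
    (u : Fin c → WeylAlgebra K n) (a b : ℤ) (ψ : KosLevel M c a)
    (T : {S : Finset (Fin c) // (S.card : ℤ) = b}) : M.carrier :=
  ∑ k ∈ (T.1)ᶜ, ((-1 : ℤ) ^ ((T.1.filter (fun x => x < k)).card)) •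
    (u k • (if h : (((insert k T.1).card : ℤ)) = a then ψ ⟨insert k T.1, h⟩ else 0))

/-- A Koszul `i`-chain is a cycle if the differential to level `i - 1` kills it. -/
def kosIsCycle {K : Type} [Field K] {n : ℕ} {M : GWM K n} {c : ℕ}
    (u : Fin c → WeylAlgebra K n) (i : ℤ) (φ : KosLevel M c i) : Prop :=
  ∀ T, kosDiff u i (i - 1) φ T = 0

/-- A Koszul `i`-chain is a boundary if it is the image of an `(i+1)`-chain. -/
def kosIsBoundary {K : Type} [Field K] {n : ℕ} {M : GWM K n} {c : ℕ}
    (u : Fin c → WeylAlgebra K n) (i : ℤ) (φ : KosLevel M c i) : Prop :=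
  ∃ ψ : KosLevel M c (i + 1), (fun T => kosDiff u (i + 1) i ψ T) = φ

/-- A Koszul `i`-chain is homogeneous of (internal) degree `j`: on a subset `S` its value
lies in degree `j - ∑_{k ∈ S} deg u_k`, where `du k` is the degree of the operator `u k`. -/
def kosHomog {K : Type} [Field K] {n : ℕ} {M : GWM K n} {c : ℕ}
    (du : Fin c → ℤ) (i j : ℤ) (φ : KosLevel M c i) : Prop :=
  ∀ S : {S : Finset (Fin c) // (S.card : ℤ) = i}, φ S ∈ M.deg (j - ∑ k ∈ S.1, du k)

/-! ### Čech complexes.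

Local cohomology `H^i_I(M)` for a homogeneous ideal `I = (f_1, …, f_s)` is the `i`-th
cohomology of the Čech complex `0 → M → ⊕ M_{f_k} → ⋯`.  We encode the Čech complex by
abstract data: a family of graded `A_n(K)`-modules `L S` (for `S ⊆ {1,…,s}`), each of which
is the localization of `M` at `∏_{k ∈ S} f_k` (characterized by the usual universal
properties: the element acts bijectively, every element is a fraction, and the kernel of the
localization map is the torsion). -/

/-- The product `f_S = ∏_{k ∈ S} f_k` (as an ordered list product). -/
noncomputable def cechProd {K : Type} [Field K] {n : ℕ} {s : ℕ}
    (f : Fin s → WeylAlgebra K n) (S : Finset (Fin s)) : WeylAlgebra K n :=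
  ((S.sort (· ≤ ·)).map f).prod

/-- Data presenting the Čech complex of a graded `A_n(K)`-module `M` with respect to the
elements `f : Fin s → A_n(K)`. -/
structure CechData (K : Type) [Field K] (n : ℕ) (M : GWM K n) (s : ℕ)
    (f : Fin s → WeylAlgebra K n) where
  /-- `L S` is the localization `M_{f_S}`, `f_S = ∏_{k ∈ S} f_k`. -/
  L : Finset (Fin s) → GWM K n
  /-- localization maps `M_{f_S} → M_{f_T}` for `S ⊆ T`. -/
  ρ : ∀ {S T : Finset (Fin s)}, S ⊆ T → (L S).carrier → (L T).carrier
  ρ_add : ∀ {S T : Finset (Fin s)} (h : S ⊆ T) (x y : (L S).carrier),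
    ρ h (x + y) = ρ h x + ρ h y
  ρ_smul : ∀ {S T : Finset (Fin s)} (h : S ⊆ T) (w : WeylAlgebra K n) (x : (L S).carrier),
    ρ h (w • x) = w • ρ h x
  ρ_deg : ∀ {S T : Finset (Fin s)} (h : S ⊆ T) (j : ℤ) (x : (L S).carrier),
    x ∈ (L S).deg j → ρ h x ∈ (L T).deg j
  ρ_id : ∀ (S : Finset (Fin s)) (x : (L S).carrier), ρ (le_refl S) x = x
  ρ_comp : ∀ {S T U : Finset (Fin s)} (h1 : S ⊆ T) (h2 : T ⊆ U) (x : (L S).carrier),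
    ρ h2 (ρ h1 x) = ρ (h1.trans h2) x
  /-- the identification of `M` with the empty localization. -/
  η : M.carrier → (L ∅).carrier
  η_add : ∀ x y, η (x + y) = η x + η y
  η_smul : ∀ (w : WeylAlgebra K n) (x : M.carrier), η (w • x) = w • η x
  η_deg : ∀ (j : ℤ) (x : M.carrier), x ∈ M.deg j → η x ∈ (L ∅).deg j
  η_bij : Function.Bijective η
  loc_bij : ∀ S : Finset (Fin s),
    Function.Bijective (fun z : (L S).carrier => (cechProd f S) • z)
  loc_surj : ∀ (S : Finset (Fin s)) (z : (L S).carrier),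
    ∃ (m : M.carrier) (k : ℕ), ((cechProd f S) ^ k) • z = ρ (Finset.empty_subset S) (η m)
  loc_ker : ∀ (S : Finset (Fin s)) (m : M.carrier),
    ρ (Finset.empty_subset S) (η m) = 0 ↔ ∃ k : ℕ, ((cechProd f S) ^ k) • m = 0

/-- Level `i` of the Čech complex. -/
abbrev CechLevel {K : Type} [Field K] {n : ℕ} {M : GWM K n} {s : ℕ}
    {f : Fin s → WeylAlgebra K n} (D : CechData K n M s f) (i : ℤ) : Type :=
  ∀ S : {S : Finset (Fin s) // (S.card : ℤ) = i}, (D.L S.1).carrier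

/-- The Čech differential (from level `a` to level `b`; it is the genuine coboundary when
`b = a + 1`): `(dψ)(T) = ∑_{k ∈ T} (-1)^{|{x ∈ T | x < k}|} ρ(ψ(T \ {k}))`. -/
noncomputable def cechDiff {K : Type} [Field K] {n : ℕ} {M : GWM K n} {s : ℕ}
    {f : Fin s → WeylAlgebra K n} (D : CechData K n M s f) (a b : ℤ) (ψ : CechLevel D a)
    (T : {S : Finset (Fin s) // (S.card : ℤ) = b}) : (D.L T.1).carrier :=
  ∑ k ∈ T.1.attach, ((-1 : ℤ) ^ ((T.1.filter (fun x => x < k.1)).card)) •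
    (if h : (((T.1.erase k.1).card : ℤ)) = a then
      D.ρ (Finset.erase_subset k.1 T.1) (ψ ⟨T.1.erase k.1, h⟩) else 0)

def cechIsCycle {K : Type} [Field K] {n : ℕ} {M : GWM K n} {s : ℕ}
    {f : Fin s → WeylAlgebra K n} (D : CechData K n M s f) (i : ℤ)
    (φ : CechLevel D i) : Prop :=
  ∀ T, cechDiff D i (i + 1) φ T = 0

def cechIsBoundary {K : Type} [Field K] {n : ℕ} {M : GWM K n} {s : ℕ}
    {f : Fin s → WeylAlgebra K n} (D : CechData K n M s f) (i : ℤ)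
    (φ : CechLevel D i) : Prop :=
  ∃ ψ : CechLevel D (i - 1), (fun T => cechDiff D (i - 1) i ψ T) = φ

def cechHomog {K : Type} [Field K] {n : ℕ} {M : GWM K n} {s : ℕ}
    {f : Fin s → WeylAlgebra K n} (D : CechData K n M s f) (i j : ℤ)
    (φ : CechLevel D i) : Prop :=
  ∀ S : {S : Finset (Fin s) // (S.card : ℤ) = i}, φ S ∈ (D.L S.1).deg j

/-- `W` realizes the `i`-th cohomology of the Čech complex `D`, i.e. `W ≅ H^i_{(f)}(M)`
as graded `A_n(K)`-modules. -/
def IsCechCohomologyOf {K : Type} [Field K] {n : ℕ} {M : GWM K n} {s : ℕ}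
    {f : Fin s → WeylAlgebra K n} (D : CechData K n M s f) (i : ℤ) (W : GWM K n) : Prop :=
  ∃ π : CechLevel D i → W.carrier,
    (∀ x y, π (x + y) = π x + π y) ∧
    (∀ (w : WeylAlgebra K n) x, π (w • x) = w • π x) ∧
    (∀ x, cechIsCycle D i x → (π x = 0 ↔ cechIsBoundary D i x)) ∧
    (∀ (j : ℤ) x, cechIsCycle D i x → cechHomog D i j x → π x ∈ W.deg j) ∧
    (∀ (j : ℤ) (w : W.carrier), w ∈ W.deg j →
      ∃ x, cechIsCycle D i x ∧ cechHomog D i j x ∧ π x = w)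

/-!
Every localization `M_{f_S}` occurring in the Čech complex is again generalized Eulerian.
A homogeneous `z ∈ M_{f_S}` of degree `j` satisfies `f_S^k z = m/1`, and comparing graded
components `m` may be taken homogeneous of degree `j + k·deg f_S`. A homogeneous polynomial `g`
of degree `d` satisfies `g (ℰ_n - c) = (ℰ_n - c - d) g`, so the power of `ℰ_n - j - k·deg f_S`
killing `m` moves past `f_S^k` to a power of `ℰ_n - j` killing `f_S^k z`, hence `z`, because
`f_S` acts injectively on `M_{f_S}`. A homogeneous Čech cochain of degree `j` is therefore
itself annihilated by a power of `ℰ_n - j`, and `0` is a coboundary.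
-/

section WeylAlgebra

variable {K : Type} [Field K] {n : ℕ}

theorem Wd_mul_Wx (i j : Fin n) :
    Wd K i * Wx K j = Wx K j * Wd K i + if i = j then 1 else 0 := by
  have h := RingQuot.mkAlgHom_rel K (WeylRel.dx (K := K) (n := n) i j)
  simp only [map_mul, map_add] at h
  rw [Wd, Wx, h]
  congr 1
  split <;> simp

theorem Wx_commute (i j : Fin n) : Commute (Wx K i) (Wx K j) := by
  have h := RingQuot.mkAlgHom_rel K (WeylRel.xx (K := K) (n := n) i j)
  simp only [map_mul] at h
  exact h

theorem semiconjBy_Wx_weylEuler (i : Fin n) :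
    SemiconjBy (Wx K i) (weylEuler K n + 1) (weylEuler K n) := by
  have hX : ∑ l : Fin n, Wx K l * (if l = i then 1 else 0) = Wx K i := by
    simp
  have hterm : ∀ l : Fin n, Wx K l * Wd K l * Wx K i
      = Wx K i * (Wx K l * Wd K l) + Wx K l * (if l = i then 1 else 0) := by
    intro l
    rw [mul_assoc, Wd_mul_Wx, mul_add, ← mul_assoc, (Wx_commute l i).eq, mul_assoc]
  rw [SemiconjBy, weylEuler, Finset.sum_mul, Finset.sum_congr rfl fun l _ => hterm l,
    Finset.sum_add_distrib, hX, ← Finset.mul_sum, mul_add_one]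

theorem semiconjBy_list_prod_Wx_weylEuler (l : List (Fin n)) :
    SemiconjBy (l.map (Wx K)).prod (weylEuler K n + l.length) (weylEuler K n) := by
  induction l with
  | nil => simp
  | cons a t ih =>
    rw [List.map_cons, List.prod_cons, List.length_cons, Nat.cast_succ, ← add_assoc]
    exact (semiconjBy_Wx_weylEuler a).mul_left (ih.add_right (SemiconjBy.one_right _))

theorem IsHomogPoly.semiconjBy_weylEuler {g : WeylAlgebra K n} {d : ℕ}
    (hg : IsHomogPoly K g d) : SemiconjBy g (weylEuler K n + d) (weylEuler K n) := by
  induction hg using Submodule.span_induction with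
  | mem w hw =>
    obtain ⟨l, rfl, rfl⟩ := hw
    exact semiconjBy_list_prod_Wx_weylEuler l
  | zero => exact SemiconjBy.zero_left _ _
  | add x y _ _ hx hy => exact hx.add_left hy
  | smul c x _ hx => exact hx.smul_left c

theorem IsHomogPoly.semiconjBy_weylEuler_sub {g : WeylAlgebra K n} {d : ℕ}
    (hg : IsHomogPoly K g d) (c : ℤ) :
    SemiconjBy g (weylEuler K n - (c : WeylAlgebra K n))
      (weylEuler K n - ((c + d : ℤ) : WeylAlgebra K n)) := by
  have h := hg.semiconjBy_weylEuler.sub_right (Int.cast_commute (c + d) g).symm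
  push_cast
  rwa [Int.cast_add, Int.cast_natCast, add_sub_add_right_eq_sub] at h

theorem isHomogPoly_list_prod_Wx (l : List (Fin n)) :
    IsHomogPoly K (l.map (Wx K)).prod l.length :=
  Submodule.subset_span ⟨l, rfl, rfl⟩

theorem IsHomogPoly.mul {g h : WeylAlgebra K n} {d e : ℕ}
    (hg : IsHomogPoly K g d) (hh : IsHomogPoly K h e) : IsHomogPoly K (g * h) (d + e) := by
  induction hg using Submodule.span_induction with
  | mem w hw =>
    obtain ⟨l, rfl, rfl⟩ := hw
    induction hh using Submodule.span_induction with
    | mem w' hw' =>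
      obtain ⟨l', rfl, rfl⟩ := hw'
      simpa using isHomogPoly_list_prod_Wx (K := K) (n := n) (l ++ l')
    | zero => rw [mul_zero]; exact Submodule.zero_mem _
    | add x y _ _ hx hy => rw [mul_add]; exact Submodule.add_mem _ hx hy
    | smul c x _ hx => rw [mul_smul_comm]; exact Submodule.smul_mem _ c hx
  | zero => rw [zero_mul]; exact Submodule.zero_mem _
  | add x y _ _ hx hy => rw [add_mul]; exact Submodule.add_mem _ hx hy
  | smul c x _ hx => rw [smul_mul_assoc]; exact Submodule.smul_mem _ c hx

theorem IsHomogPoly.pow {g : WeylAlgebra K n} {d : ℕ} (hg : IsHomogPoly K g d) (k : ℕ) :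
    IsHomogPoly K (g ^ k) (k * d) := by
  induction k with
  | zero => simpa using isHomogPoly_list_prod_Wx (K := K) []
  | succ k ih => rw [Nat.succ_mul, pow_succ]; exact ih.mul hg

theorem isHomogPoly_list_prod {s : ℕ} {f : Fin s → WeylAlgebra K n} {df : Fin s → ℕ}
    (hf : ∀ k, IsHomogPoly K (f k) (df k)) (l : List (Fin s)) :
    IsHomogPoly K (l.map f).prod (l.map df).sum := by
  induction l with
  | nil => simpa using isHomogPoly_list_prod_Wx (K := K) []
  | cons a t ih => simpa using (hf a).mul ih

theorem isHomogPoly_cechProd {s : ℕ} {f : Fin s → WeylAlgebra K n} {df : Fin s → ℕ}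
    (hf : ∀ k, IsHomogPoly K (f k) (df k)) (S : Finset (Fin s)) :
    IsHomogPoly K (cechProd f S) ((S.sort (· ≤ ·)).map df).sum :=
  isHomogPoly_list_prod hf _

theorem GWM.list_prod_Wx_smul_mem_deg (N : GWM K n) (l : List (Fin n)) {j : ℤ}
    {z : N.carrier} (hz : z ∈ N.deg j) : (l.map (Wx K)).prod • z ∈ N.deg (j + l.length) := by
  induction l with
  | nil => simpa using hz
  | cons a t ih =>
    rw [List.map_cons, List.prod_cons, mul_smul, List.length_cons, Nat.cast_succ, ← add_assoc]
    exact N.x_smul a _ _ ih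

theorem IsHomogPoly.smul_mem_deg {N : GWM K n} {g : WeylAlgebra K n} {d : ℕ}
    (hg : IsHomogPoly K g d) {j : ℤ} {z : N.carrier} (hz : z ∈ N.deg j) :
    g • z ∈ N.deg (j + d) := by
  induction hg using Submodule.span_induction with
  | mem w hw =>
    obtain ⟨l, rfl, rfl⟩ := hw
    exact N.list_prod_Wx_smul_mem_deg l hz
  | zero => rw [zero_smul]; exact zero_mem _
  | add x y _ _ hx hy => rw [add_smul]; exact add_mem hx hy
  | smul c x _ hx => rw [Algebra.smul_def, mul_smul]; exact N.k_smul c _ _ hx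

end WeylAlgebra

theorem DirectSum.IsInternal.exists_mem_of_map_mem {ι A B : Type*} [DecidableEq ι]
    [AddCommGroup A] [AddCommGroup B] {𝒜 : ι → AddSubgroup A} {ℬ : ι → AddSubgroup B}
    (h𝒜 : IsInternal 𝒜) (hℬ : IsInternal ℬ) (F : A →+ B) (hF : ∀ i, ∀ x ∈ 𝒜 i, F x ∈ ℬ i)
    {i : ι} {y : B} (hy : y ∈ ℬ i) (hyF : y ∈ F.range) : ∃ x ∈ 𝒜 i, F x = y := by
  let := h𝒜.chooseDecomposition
  let := hℬ.chooseDecomposition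
  have hcomp (x : A) : F (decompose 𝒜 x i) = (decompose ℬ (F x) i : B) := by
    induction x using Decomposition.inductionOn 𝒜 with
    | zero => simp
    | @homogeneous j m =>
      by_cases hji : j = i
      · subst hji
        rw [decompose_of_mem_same 𝒜 m.2, decompose_of_mem_same ℬ (hF j m m.2)]
      · rw [decompose_of_mem_ne 𝒜 m.2 hji, decompose_of_mem_ne ℬ (hF j m m.2) hji, map_zero]
    | add x x' hx hx' => simp [hx, hx']
  obtain ⟨x, rfl⟩ := hyF
  exact ⟨decompose 𝒜 x i, (decompose 𝒜 x i).2, by rw [hcomp, decompose_of_mem_same ℬ hy]⟩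

theorem exists_pow_smul_eq_zero_of_forall {R ι : Type*} {M : ι → Type*} [Semiring R]
    [∀ i, AddCommMonoid (M i)] [∀ i, Module R (M i)] [Finite ι] (u : R) (x : ∀ i, M i)
    (h : ∀ i, ∃ a : ℕ, u ^ a • x i = 0) : ∃ a : ℕ, u ^ a • x = 0 := by
  choose a ha using h
  have := Fintype.ofFinite ι
  refine ⟨Finset.univ.sup a, funext fun i => ?_⟩
  rw [Pi.smul_apply, ← Nat.sub_add_cancel (Finset.le_sup (Finset.mem_univ i)), pow_add,
    mul_smul, ha, smul_zero, Pi.zero_apply]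

namespace CechData

variable {K : Type} [Field K] {n s : ℕ} {M : GWM K n} {f : Fin s → WeylAlgebra K n}
  (D : CechData K n M s f)

theorem ρ_zero {S T : Finset (Fin s)} (h : S ⊆ T) : D.ρ h 0 = 0 :=
  map_zero (AddMonoidHom.mk' (D.ρ h) (D.ρ_add h))

noncomputable def toLoc (S : Finset (Fin s)) : M.carrier →+ (D.L S).carrier :=
  AddMonoidHom.mk' (fun x => D.ρ (Finset.empty_subset S) (D.η x))
    fun x y => by rw [D.η_add, D.ρ_add]

theorem toLoc_smul (S : Finset (Fin s)) (w : WeylAlgebra K n) (x : M.carrier) :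
    D.toLoc S (w • x) = w • D.toLoc S x := by
  simp only [toLoc, AddMonoidHom.mk'_apply, D.η_smul, D.ρ_smul]

theorem toLoc_mem_deg (S : Finset (Fin s)) {j : ℤ} {x : M.carrier} (hx : x ∈ M.deg j) :
    D.toLoc S x ∈ (D.L S).deg j :=
  D.ρ_deg _ j _ (D.η_deg j x hx)

theorem isGenEulerian_L {df : Fin s → ℕ} (hf : ∀ k, IsHomogPoly K (f k) (df k))
    (hM : M.IsGenEulerian) (S : Finset (Fin s)) : (D.L S).IsGenEulerian := by
  intro j z hz
  obtain ⟨m, k, hmz⟩ := D.loc_surj S z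
  have hdk := (isHomogPoly_cechProd hf S).pow k
  obtain ⟨m', hm', hm'z⟩ := M.isInternal.exists_mem_of_map_mem (D.L S).isInternal (D.toLoc S)
    (fun _ _ => D.toLoc_mem_deg S) (hdk.smul_mem_deg hz) ⟨m, hmz.symm⟩
  obtain ⟨a, ha, hm'a⟩ := hM _ m' hm'
  refine ⟨a, ha, ?_⟩
  have hkill : cechProd f S ^ k • (weylEuler K n - (j : WeylAlgebra K n)) ^ a • z = 0 := by
    rw [← mul_smul, ((hdk.semiconjBy_weylEuler_sub j).pow_right a).eq, mul_smul, ← hm'z,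
      ← toLoc_smul, hm'a, map_zero]
  have hinj := (D.loc_bij S).injective.iterate k
  rw [smul_iterate] at hinj
  exact hinj (hkill.trans (smul_zero _).symm)

end CechData

theorem cechIsBoundary_zero {K : Type} [Field K] {n s : ℕ} {M : GWM K n}
    {f : Fin s → WeylAlgebra K n} (D : CechData K n M s f) (i : ℤ) : cechIsBoundary D i 0 :=
  ⟨0, funext fun T => by simp [cechDiff, D.ρ_zero]⟩

theorem local_cohomology_of_generalizedEulerian_is_generalizedEulerian_general
    (K : Type) [Field K] (n s : ℕ)
    (f : Fin s → WeylAlgebra K n) (df : Fin s → ℕ)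
    (hf : ∀ k, IsHomogPoly K (f k) (df k))
    (M : GWM K n) (hM : M.IsGenEulerian)
    (D : CechData K n M s f) (i : ℕ) (j : ℤ)
    (φ : CechLevel D (i : ℤ))
    (hhom : cechHomog D (i : ℤ) j φ) :
    ∃ a : ℕ, 1 ≤ a ∧
      cechIsBoundary D (i : ℤ) (((weylEuler K n - (j : WeylAlgebra K n)) ^ a) • φ) := by
  obtain ⟨a, ha⟩ := exists_pow_smul_eq_zero_of_forall (weylEuler K n - (j : WeylAlgebra K n)) φ
    fun T => (D.isGenEulerian_L hf hM T.1 j (φ T) (hhom T)).imp fun _ h => h.2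
  refine ⟨a + 1, le_add_self, ?_⟩
  rw [pow_succ', mul_smul, ha, smul_zero]
  exact cechIsBoundary_zero D i

/-- Let `I = (f_1, …, f_s)` be a homogeneous ideal of `R` and `M` a
generalized Eulerian `A_n(K)`-module.  Then `H^i_I(M)` is a generalized Eulerian
`A_n(K)`-module for every `i ≥ 0`:  in the Čech complex of `M` on `f_1, …, f_s`, every
homogeneous `i`-cocycle `φ` of degree `j` has `(ℰ_n - j)^a • φ` a coboundary for some
`a ≥ 1`. -/
theorem local_cohomology_of_generalizedEulerian_is_generalizedEulerian
    (K : Type) [Field K] [CharZero K] (n s : ℕ)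
    (f : Fin s → WeylAlgebra K n) (df : Fin s → ℕ)
    (hf : ∀ k, IsHomogPoly K (f k) (df k))
    (M : GWM K n) (hM : M.IsGenEulerian)
    (D : CechData K n M s f) (i : ℕ) (j : ℤ)
    (φ : CechLevel D (i : ℤ))
    (hcyc : cechIsCycle D (i : ℤ) φ) (hhom : cechHomog D (i : ℤ) j φ) :
    ∃ a : ℕ, 1 ≤ a ∧
      cechIsBoundary D (i : ℤ) (((weylEuler K n - (j : WeylAlgebra K n)) ^ a) • φ) :=
  local_cohomology_of_generalizedEulerian_is_generalizedEulerian_general K n s f df hf M hM D i j φ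
    hhom
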